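/- arXiv:2602.19802 — 4 statements merged into one kernel-verified Lean document; each statement's English description precedes it below -/
import Mathlib

section
/- Let X be a T-by-N' complex matrix, α a scalar, and P an invertible N-by-N complex matrix with N' = M + N. Let Q = fromBlocks I_M 0 0 P, [X]_P = X·Q, and suppose the matrix Xᵀ·X + α·I_{N'} is invertible. Then the matrix [X]_Pᵀ·[X]_P + α·(fromBlocks I_M 0 0 (Pᵀ·P)) is invertible, and for any T-by-D_out complex matrix Y, ([X]_Pᵀ·[X]_P + α·(fromBlocks I_M 0 0 (Pᵀ·P)))⁻¹·[X]_Pᵀ·Y = (fromBlocks I_M 0 0 P⁻¹)·(Xᵀ·X + α·I_{N'})⁻¹·Xᵀ·Y. That is, the ridge-regression readout weights learned directly in the transformed basis equal the change-of-basis transform of the readout weights learned in the original basis. -/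
open Matrix

/-!
With `Q = fromBlocks 1 0 0 P` the regulariser `fromBlocks 1 0 0 (Pᵀ * P)` is `Qᵀ * Q`, so the
transformed normal matrix is the congruence `Qᵀ * (Xᵀ * X + α • 1) * Q`, invertible since each
factor is. Inverting it, `Qᵀ⁻¹` cancels against `(X * Q)ᵀ = Qᵀ * Xᵀ`, leaving `Q⁻¹` in front of
the original readout.
-/

namespace Matrix

variable {l m n R : Type*} [CommRing R] [Fintype n]

theorem transpose_mul_add_smul_transpose_mul [Fintype m] [DecidableEq n] (X : Matrix m n R)
    (Q : Matrix n n R) (α : R) :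
    (X * Q)ᵀ * (X * Q) + α • (Qᵀ * Q) = Qᵀ * (Xᵀ * X + α • 1) * Q := by
  simp only [transpose_mul, Matrix.mul_add, Matrix.add_mul, Matrix.mul_smul, Matrix.smul_mul,
    Matrix.mul_one, Matrix.mul_assoc]

theorem inv_transpose_mul_mul_mul_transpose_mul [DecidableEq n] {Q : Matrix n n R}
    (hQ : IsUnit Q.det) (A : Matrix n n R) (X : Matrix m n R) :
    (Qᵀ * A * Q)⁻¹ * (X * Q)ᵀ = Q⁻¹ * A⁻¹ * Xᵀ := by
  have hQT : Qᵀ⁻¹ * Qᵀ = 1 := nonsing_inv_mul _ (by rwa [det_transpose])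
  rw [Matrix.mul_inv_rev, Matrix.mul_inv_rev, transpose_mul]
  simp only [Matrix.mul_assoc]
  rw [← Matrix.mul_assoc Qᵀ⁻¹, hQT, Matrix.one_mul]

variable [Fintype l] [DecidableEq l]

theorem fromBlocks_one_zero_zero_transpose_mul (P : Matrix n n R) :
    (fromBlocks (1 : Matrix l l R) 0 0 P)ᵀ * fromBlocks 1 0 0 P =
      fromBlocks 1 0 0 (Pᵀ * P) := by
  simp [fromBlocks_transpose, fromBlocks_multiply]

theorem det_fromBlocks_one_zero_zero [DecidableEq n] (P : Matrix n n R) :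
    (fromBlocks (1 : Matrix l l R) 0 0 P).det = P.det := by
  rw [det_fromBlocks_zero₂₁, det_one, one_mul]

theorem inv_fromBlocks_one_zero_zero [DecidableEq n] {P : Matrix n n R} (hP : IsUnit P.det) :
    (fromBlocks (1 : Matrix l l R) 0 0 P)⁻¹ = fromBlocks 1 0 0 P⁻¹ := by
  have hPunit : IsUnit P := (isUnit_iff_isUnit_det P).mpr hP
  rw [inv_fromBlocks_zero₂₁_of_isUnit_iff _ _ _ (iff_of_true isUnit_one hPunit)]
  simp

end Matrix

/-- End-to-End Eigenbasis Training: the ridge-regression readout weights learned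
directly in the transformed basis equal the change-of-basis transform of the
readout weights learned in the original basis. -/
theorem stmt_3
    (T M N Dout : ℕ)
    (X : Matrix (Fin T) (Fin M ⊕ Fin N) ℂ)
    (α : ℂ)
    (P : Matrix (Fin N) (Fin N) ℂ) (hP : IsUnit P.det)
    (hX : IsUnit (Xᵀ * X + α • (1 : Matrix (Fin M ⊕ Fin N) (Fin M ⊕ Fin N) ℂ)).det) :
    let Q : Matrix (Fin M ⊕ Fin N) (Fin M ⊕ Fin N) ℂ := Matrix.fromBlocks 1 0 0 P
    IsUnit ((X * Q)ᵀ * (X * Q) + α • Matrix.fromBlocks 1 0 0 (Pᵀ * P)).det ∧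
      ∀ Y : Matrix (Fin T) (Fin Dout) ℂ,
        ((X * Q)ᵀ * (X * Q) + α • Matrix.fromBlocks 1 0 0 (Pᵀ * P))⁻¹ * (X * Q)ᵀ * Y =
          Matrix.fromBlocks 1 0 0 P⁻¹ *
            (Xᵀ * X + α • (1 : Matrix (Fin M ⊕ Fin N) (Fin M ⊕ Fin N) ℂ))⁻¹ * Xᵀ * Y := by
  intro Q
  have hQ : IsUnit Q.det := by rwa [det_fromBlocks_one_zero_zero]
  rw [← fromBlocks_one_zero_zero_transpose_mul, ← inv_fromBlocks_one_zero_zero hP,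
    transpose_mul_add_smul_transpose_mul]
  refine ⟨?_, fun Y => ?_⟩
  · rw [det_mul, det_mul, det_transpose]
    exact (hQ.mul hX).mul hQ
  · rw [inv_transpose_mul_mul_mul_transpose_mul hQ]
end

section
/- Let N be a positive integer, let Λ ∈ ℂ^N, let w_in ∈ ℂ^{1×N} and w_out ∈ ℂ^{N×1}, let u : ℕ → ℂ be a scalar input sequence, let r : ℕ → ℂ^{1×N} satisfy r(0) = 0 and r(t) = r(t-1) ⊙ Λ + u(t)·w_in, and let R : ℕ → ℂ^{1×N} satisfy R(0) = 0 and R(t) = R(t-1) ⊙ Λ + u(t)·𝟏 (where 𝟏 is the all-ones row vector of length N). Then for all t ≥ 0, r(t)·w_out = R(t)·(w_inᵀ ⊙ w_out), where w_inᵀ ⊙ w_out is the entrywise product of the column vectors w_inᵀ and w_out. In particular, r(t)·w_out = Σ_{p=1}^{N} R(t)_p·(w_in)_p·(w_out)_p. -/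
open Matrix

/-!
Coordinatewise, `r(t)_j` and `R(t)_j · (w_in)_j` satisfy the same scalar linear recurrence,
so `r(t) = R(t) · diag(w_in)`, and the diagonal factor moves into the readout by associativity.
-/

theorem eq_mul_of_linear_recurrence {α : Type*} [CommSemiring α] {a w : α} {u x y : ℕ → α}
    (hx0 : x 0 = 0) (hx : ∀ t, x (t + 1) = x t * a + u (t + 1) * w)
    (hy0 : y 0 = 0) (hy : ∀ t, y (t + 1) = y t * a + u (t + 1)) :
    ∀ t, x t = y t * w
  | 0 => by rw [hx0, hy0, zero_mul]
  | t + 1 => by rw [hx, hy, eq_mul_of_linear_recurrence hx0 hx hy0 hy t]; ring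

theorem stmt_8_general
    (N : ℕ)
    (Λ : Fin N → ℂ)
    (w_in : Matrix (Fin 1) (Fin N) ℂ)
    (w_out : Matrix (Fin N) (Fin 1) ℂ)
    (u : ℕ → ℂ)
    (r : ℕ → Matrix (Fin 1) (Fin N) ℂ)
    (R : ℕ → Matrix (Fin 1) (Fin N) ℂ)
    (hr0 : r 0 = 0)
    (hr : ∀ t : ℕ, 1 ≤ t →
      r t = Matrix.of (fun (i : Fin 1) (j : Fin N) => r (t - 1) i j * Λ j) + u t • w_in)
    (hR0 : R 0 = 0)
    (hR : ∀ t : ℕ, 1 ≤ t →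
      R t = Matrix.of (fun (i : Fin 1) (j : Fin N) => R (t - 1) i j * Λ j)
              + Matrix.of (fun (_ : Fin 1) (_ : Fin N) => u t)) :
    ∀ t : ℕ,
      r t * w_out =
        R t * Matrix.of (fun (p : Fin N) (_ : Fin 1) => w_in 0 p * w_out p 0) ∧
      (r t * w_out) 0 0 = ∑ p : Fin N, R t 0 p * w_in 0 p * w_out p 0 := by
  have hstate : ∀ t, r t = R t * diagonal (w_in 0) := by
    intro t
    ext i j
    rw [Subsingleton.elim i 0, mul_diagonal]
    refine eq_mul_of_linear_recurrence (a := Λ j) (u := u) (x := fun t => r t 0 j)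
      (y := fun t => R t 0 j) (by simp [hr0]) (fun t => ?_) (by simp [hR0]) (fun t => ?_) t
    · simp [hr (t + 1) t.succ_pos]
    · simp [hR (t + 1) t.succ_pos]
  have hweights :
      of (fun p (_ : Fin 1) => w_in 0 p * w_out p 0) = diagonal (w_in 0) * w_out := by
    ext p k
    rw [Subsingleton.elim k 0, diagonal_mul, of_apply]
  intro t
  have hout : r t * w_out = R t * of (fun p (_ : Fin 1) => w_in 0 p * w_out p 0) := by
    rw [hweights, hstate, Matrix.mul_assoc]
  refine ⟨hout, ?_⟩
  rw [hout, mul_apply]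
  simp only [of_apply, mul_assoc]

/-- One-dimensional input/output case: the output `r(t)·w_out` equals the output
computed from the input-weight-free state, `R(t)·(w_inᵀ ⊙ w_out)`; in particular
`r(t)·w_out = Σ_p R(t)_p·(w_in)_p·(w_out)_p`. -/
theorem stmt_8
    (N : ℕ) (hN : 0 < N)
    (Λ : Fin N → ℂ)
    (w_in : Matrix (Fin 1) (Fin N) ℂ)
    (w_out : Matrix (Fin N) (Fin 1) ℂ)
    (u : ℕ → ℂ)
    (r : ℕ → Matrix (Fin 1) (Fin N) ℂ)
    (R : ℕ → Matrix (Fin 1) (Fin N) ℂ)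
    (hr0 : r 0 = 0)
    (hr : ∀ t : ℕ, 1 ≤ t →
      r t = Matrix.of (fun (i : Fin 1) (j : Fin N) => r (t - 1) i j * Λ j) + u t • w_in)
    (hR0 : R 0 = 0)
    (hR : ∀ t : ℕ, 1 ≤ t →
      R t = Matrix.of (fun (i : Fin 1) (j : Fin N) => R (t - 1) i j * Λ j)
              + Matrix.of (fun (_ : Fin 1) (_ : Fin N) => u t)) :
    ∀ t : ℕ,
      r t * w_out =
        R t * Matrix.of (fun (p : Fin N) (_ : Fin 1) => w_in 0 p * w_out p 0) ∧
      (r t * w_out) 0 0 = ∑ p : Fin N, R t 0 p * w_in 0 p * w_out p 0 :=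
  stmt_8_general N Λ w_in w_out u r R hr0 hr hR0 hR
end

section
/- Let N be a positive integer, let Λ ∈ ℂ^N, let w_in ∈ ℂ^{1×N} have no zero entry, let u : ℕ → ℂ be a scalar input sequence, let r : ℕ → ℂ^{1×N} satisfy r(0) = 0 and r(t) = r(t-1) ⊙ Λ + u(t)·w_in, and let R : ℕ → ℂ^{1×N} satisfy R(0) = 0 and R(t) = R(t-1) ⊙ Λ + u(t)·𝟏. Let T ≥ 1 and let L : ℂ^T → ℝ be any loss function of the length-T output sequence. Then the map β ↦ w_inᵀ ⊙ β is a bijection of ℂ^{N×1} (with inverse γ ↦ γ ⊘ w_inᵀ, entrywise division), and a column vector β ∈ ℂ^{N×1} minimizes β ↦ L((r(1)·β, …, r(T)·β)) over ℂ^{N×1} if and only if γ = w_inᵀ ⊙ β minimizes γ ↦ L((R(1)·γ, …, R(T)·γ)) over ℂ^{N×1}. Consequently, if γ* is a minimizer of the second problem, then w_out = γ* ⊘ w_inᵀ is a minimizer of the first. -/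
open Matrix

/-! The input weights of a diagonal linear reservoir factor out of its states: by induction on
the recurrence, `r t = w_in ⊙ R t`, hence `r t * β = R t * (w_inᵀ ⊙ β)`. Since `w_in` has no zero
entry, `β ↦ w_inᵀ ⊙ β` is a bijection, so the two readout losses are the same function up to
this change of variables and have corresponding minimizers. -/

def Matrix.rowScaleEquiv {n o α : Type*} [CommGroupWithZero α] (d : n → α) (hd : ∀ p, d p ≠ 0) :
    Matrix n o α ≃ Matrix n o α where
  toFun β := of fun p k => d p * β p k
  invFun γ := of fun p k => γ p k / d p
  left_inv β := by ext p k; exact mul_div_cancel_left₀ _ (hd p)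
  right_inv γ := by ext p k; exact mul_div_cancel₀ _ (hd p)

theorem state_eq_hadamard_of_diagonal_recurrence {m n α : Type*} [CommSemiring α]
    (Λ : n → α) (w : Matrix m n α) (u : ℕ → α) (r R : ℕ → Matrix m n α)
    (hr0 : r 0 = 0) (hr : ∀ t, 1 ≤ t → r t = of (fun i j => r (t - 1) i j * Λ j) + u t • w)
    (hR0 : R 0 = 0) (hR : ∀ t, 1 ≤ t → R t = of (fun i j => R (t - 1) i j * Λ j) + of fun _ _ => u t)
    (t : ℕ) : r t = w ⊙ R t := by
  induction t with
  | zero => simp [hr0, hR0]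
  | succ t ih =>
    ext i j
    rw [hr _ t.succ_pos, hR _ t.succ_pos]
    simp only [Nat.succ_sub_one, ih, Matrix.add_apply, of_apply, Matrix.smul_apply, smul_eq_mul,
      hadamard_apply]
    ring

theorem hadamard_row_mul {n o α : Type*} [Fintype n] [CommSemiring α]
    (w A : Matrix (Fin 1) n α) (β : Matrix n o α) :
    (w ⊙ A) * β = A * of fun p k => w 0 p * β p k := by
  ext i k
  simp only [mul_apply, hadamard, of_apply, Subsingleton.elim i 0]
  exact Finset.sum_congr rfl fun _ _ => by ring

theorem stmt_9_general
    (N T : ℕ)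
    (Λ : Fin N → ℂ)
    (w_in : Matrix (Fin 1) (Fin N) ℂ) (hw : ∀ j : Fin N, w_in 0 j ≠ 0)
    (u : ℕ → ℂ)
    (r : ℕ → Matrix (Fin 1) (Fin N) ℂ)
    (R : ℕ → Matrix (Fin 1) (Fin N) ℂ)
    (hr0 : r 0 = 0)
    (hr : ∀ t : ℕ, 1 ≤ t →
      r t = Matrix.of (fun (i : Fin 1) (j : Fin N) => r (t - 1) i j * Λ j) + u t • w_in)
    (hR0 : R 0 = 0)
    (hR : ∀ t : ℕ, 1 ≤ t →
      R t = Matrix.of (fun (i : Fin 1) (j : Fin N) => R (t - 1) i j * Λ j)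
              + Matrix.of (fun (_ : Fin 1) (_ : Fin N) => u t))
    (L : (Fin T → ℂ) → ℝ) :
    -- the reparametrization map and its entrywise-division inverse
    Function.Bijective
      (fun β : Matrix (Fin N) (Fin 1) ℂ =>
        Matrix.of (fun (p : Fin N) (o : Fin 1) => w_in 0 p * β p o)) ∧
    (∀ γ : Matrix (Fin N) (Fin 1) ℂ,
      Matrix.of (fun (p : Fin N) (o : Fin 1) =>
        w_in 0 p * (Matrix.of (fun (q : Fin N) (o' : Fin 1) => γ q o' / w_in 0 q)) p o)
        = γ) ∧
    (∀ β : Matrix (Fin N) (Fin 1) ℂ,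
      Matrix.of (fun (p : Fin N) (o : Fin 1) =>
        (Matrix.of (fun (q : Fin N) (o' : Fin 1) => w_in 0 q * β q o')) p o / w_in 0 p)
        = β) ∧
    -- β minimizes the original problem iff w_inᵀ ⊙ β minimizes the transformed one
    (∀ β : Matrix (Fin N) (Fin 1) ℂ,
      (∀ β' : Matrix (Fin N) (Fin 1) ℂ,
          L (fun t : Fin T => (r (t.1 + 1) * β) 0 0) ≤
            L (fun t : Fin T => (r (t.1 + 1) * β') 0 0)) ↔
      (∀ γ' : Matrix (Fin N) (Fin 1) ℂ,
          L (fun t : Fin T =>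
              (R (t.1 + 1) * Matrix.of (fun (p : Fin N) (o : Fin 1) => w_in 0 p * β p o)) 0 0) ≤
            L (fun t : Fin T => (R (t.1 + 1) * γ') 0 0))) ∧
    -- consequently, a minimizer γ* of the second problem gives γ* ⊘ w_inᵀ for the first
    (∀ γstar : Matrix (Fin N) (Fin 1) ℂ,
      (∀ γ' : Matrix (Fin N) (Fin 1) ℂ,
          L (fun t : Fin T => (R (t.1 + 1) * γstar) 0 0) ≤
            L (fun t : Fin T => (R (t.1 + 1) * γ') 0 0)) →
      (∀ β' : Matrix (Fin N) (Fin 1) ℂ,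
          L (fun t : Fin T =>
              (r (t.1 + 1) * Matrix.of (fun (p : Fin N) (o : Fin 1) => γstar p o / w_in 0 p)) 0 0) ≤
            L (fun t : Fin T => (r (t.1 + 1) * β') 0 0))) := by
  set e := rowScaleEquiv (o := Fin 1) (w_in 0) hw
  have readout (t : ℕ) (β : Matrix (Fin N) (Fin 1) ℂ) : r t * β = R t * e β := by
    rw [state_eq_hadamard_of_diagonal_recurrence Λ w_in u r R hr0 hr hR0 hR, hadamard_row_mul]
    rfl
  refine ⟨e.bijective, e.right_inv, e.left_inv, fun β => ?_, fun γstar hmin β' => ?_⟩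
  · simp only [readout]
    exact e.forall_congr_right (q := fun γ => _ ≤ L fun t => (R (t.1 + 1) * γ) 0 0)
  · simp only [readout]
    exact (e.apply_symm_apply γstar).symm ▸ hmin (e β')

/-- Readout optimization without input weights: when `w_in` has no zero entry, the
map `β ↦ w_inᵀ ⊙ β` is a bijection of `ℂ^{N×1}` (with inverse the entrywise
division by `w_inᵀ`), and `β` minimizes the loss of the output sequence
`(r(t)·β)_{1≤t≤T}` iff `γ = w_inᵀ ⊙ β` minimizes the loss of `(R(t)·γ)_{1≤t≤T}`;
consequently a minimizer `γ*` of the second problem yields the minimizer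
`w_out = γ* ⊘ w_inᵀ` of the first. -/
theorem stmt_9
    (N T : ℕ) (hN : 0 < N) (hT : 1 ≤ T)
    (Λ : Fin N → ℂ)
    (w_in : Matrix (Fin 1) (Fin N) ℂ) (hw : ∀ j : Fin N, w_in 0 j ≠ 0)
    (u : ℕ → ℂ)
    (r : ℕ → Matrix (Fin 1) (Fin N) ℂ)
    (R : ℕ → Matrix (Fin 1) (Fin N) ℂ)
    (hr0 : r 0 = 0)
    (hr : ∀ t : ℕ, 1 ≤ t →
      r t = Matrix.of (fun (i : Fin 1) (j : Fin N) => r (t - 1) i j * Λ j) + u t • w_in)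
    (hR0 : R 0 = 0)
    (hR : ∀ t : ℕ, 1 ≤ t →
      R t = Matrix.of (fun (i : Fin 1) (j : Fin N) => R (t - 1) i j * Λ j)
              + Matrix.of (fun (_ : Fin 1) (_ : Fin N) => u t))
    (L : (Fin T → ℂ) → ℝ) :
    -- the reparametrization map and its entrywise-division inverse
    Function.Bijective
      (fun β : Matrix (Fin N) (Fin 1) ℂ =>
        Matrix.of (fun (p : Fin N) (o : Fin 1) => w_in 0 p * β p o)) ∧
    (∀ γ : Matrix (Fin N) (Fin 1) ℂ,
      Matrix.of (fun (p : Fin N) (o : Fin 1) =>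
        w_in 0 p * (Matrix.of (fun (q : Fin N) (o' : Fin 1) => γ q o' / w_in 0 q)) p o)
        = γ) ∧
    (∀ β : Matrix (Fin N) (Fin 1) ℂ,
      Matrix.of (fun (p : Fin N) (o : Fin 1) =>
        (Matrix.of (fun (q : Fin N) (o' : Fin 1) => w_in 0 q * β q o')) p o / w_in 0 p)
        = β) ∧
    -- β minimizes the original problem iff w_inᵀ ⊙ β minimizes the transformed one
    (∀ β : Matrix (Fin N) (Fin 1) ℂ,
      (∀ β' : Matrix (Fin N) (Fin 1) ℂ,
          L (fun t : Fin T => (r (t.1 + 1) * β) 0 0) ≤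
            L (fun t : Fin T => (r (t.1 + 1) * β') 0 0)) ↔
      (∀ γ' : Matrix (Fin N) (Fin 1) ℂ,
          L (fun t : Fin T =>
              (R (t.1 + 1) * Matrix.of (fun (p : Fin N) (o : Fin 1) => w_in 0 p * β p o)) 0 0) ≤
            L (fun t : Fin T => (R (t.1 + 1) * γ') 0 0))) ∧
    -- consequently, a minimizer γ* of the second problem gives γ* ⊘ w_inᵀ for the first
    (∀ γstar : Matrix (Fin N) (Fin 1) ℂ,
      (∀ γ' : Matrix (Fin N) (Fin 1) ℂ,
          L (fun t : Fin T => (R (t.1 + 1) * γstar) 0 0) ≤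
            L (fun t : Fin T => (R (t.1 + 1) * γ') 0 0)) →
      (∀ β' : Matrix (Fin N) (Fin 1) ℂ,
          L (fun t : Fin T =>
              (r (t.1 + 1) * Matrix.of (fun (p : Fin N) (o : Fin 1) => γstar p o / w_in 0 p)) 0 0) ≤
            L (fun t : Fin T => (r (t.1 + 1) * β') 0 0))) :=
  stmt_9_general N T Λ w_in hw u r R hr0 hr hR0 hR L
end

section
/- Let N, D_in, D_out be positive integers, let Λ ∈ ℂ^N, W_in ∈ ℂ^{D_in×N}, W_out ∈ ℂ^{N×D_out}, and let u : ℕ → ℂ^{D_in}. Let r : ℕ → ℂ^{1×N} satisfy r(0) = 0 and r(t) = r(t-1) ⊙ Λ + u(t)ᵀ·W_in, and let R : ℕ → ℂ^{D_in×N} satisfy R(0) = 0 and R(t)_{d,j} = R(t-1)_{d,j}·Λ_j + u(t)_d. Then the output y(t) = r(t)·W_out satisfies, for all t ≥ 0, y(t) = (𝟏ᵀ·(W_in ⊙ R(t)))·W_out, where 𝟏 is the all-ones column vector of length D_in and ⊙ is entrywise matrix multiplication. In particular, the temporal dynamics of the network are entirely captured by R(t) and Λ, independently of the input weights W_in. 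-/
open Matrix

/-!
Both recursions are linear with the same diagonal transition `Λ`, and the input term of `r`,
`(u(t)ᵀ W_in)_j = ∑_d u(t)_d (W_in)_{dj}`, is the `W_in`-weighted column sum of the input term
of `R`. Hence `r(t)_j = ∑_d (W_in)_{dj} R(t)_{dj}` for all `t`, by induction on `t`.
-/

section DiagonalLinearReservoir

variable {ι m n R : Type*} [Fintype m] [CommSemiring R]

theorem ones_mul_apply (A : Matrix m n R) (i : ι) (j : n) :
    (of (fun (_ : ι) (_ : m) => (1 : R)) * A) i j = ∑ d, A d j := by
  simp [mul_apply]

theorem state_apply_eq_sum_hadamard (Λ : n → R) (W : Matrix m n R) (u : ℕ → m → R)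
    (r : ℕ → Matrix ι n R) (S : ℕ → Matrix m n R) (hr0 : r 0 = 0)
    (hr : ∀ t i j, r (t + 1) i j = r t i j * Λ j + vecMul (u (t + 1)) W j)
    (hS0 : S 0 = 0) (hS : ∀ t d j, S (t + 1) d j = S t d j * Λ j + u (t + 1) d) :
    ∀ t i j, r t i j = ∑ d, (W ⊙ S t) d j := by
  intro t
  induction t with
  | zero => simp [hr0, hS0]
  | succ t ih =>
    intro i j
    simp only [hr, ih i j, hadamard_apply, hS, vecMul, dotProduct, Finset.sum_mul,
      ← Finset.sum_add_distrib]
    exact Finset.sum_congr rfl fun d _ => by ring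

theorem state_eq_ones_mul_hadamard (Λ : n → R) (W : Matrix m n R) (u : ℕ → m → R)
    (r : ℕ → Matrix ι n R) (S : ℕ → Matrix m n R) (hr0 : r 0 = 0)
    (hr : ∀ t i j, r (t + 1) i j = r t i j * Λ j + vecMul (u (t + 1)) W j)
    (hS0 : S 0 = 0) (hS : ∀ t d j, S (t + 1) d j = S t d j * Λ j + u (t + 1) d) (t : ℕ) :
    r t = of (fun (_ : ι) (_ : m) => (1 : R)) * (W ⊙ S t) := by
  ext i j
  rw [ones_mul_apply, state_apply_eq_sum_hadamard Λ W u r S hr0 hr hS0 hS]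

end DiagonalLinearReservoir

theorem stmt_15_general
    (N Din Dout : ℕ)
    (Λ : Fin N → ℂ)
    (Win : Matrix (Fin Din) (Fin N) ℂ)
    (Wout : Matrix (Fin N) (Fin Dout) ℂ)
    (u : ℕ → Fin Din → ℂ)
    (r : ℕ → Matrix (Fin 1) (Fin N) ℂ)
    (R : ℕ → Matrix (Fin Din) (Fin N) ℂ)
    (hr0 : r 0 = 0)
    (hr : ∀ t : ℕ, 1 ≤ t →
      r t = Matrix.of (fun (i : Fin 1) (j : Fin N) => r (t - 1) i j * Λ j)
              + Matrix.of (fun (_ : Fin 1) (j : Fin N) => Matrix.vecMul (u t) Win j))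
    (hR0 : R 0 = 0)
    (hR : ∀ t : ℕ, 1 ≤ t → ∀ (d : Fin Din) (j : Fin N),
      R t d j = R (t - 1) d j * Λ j + u t d) :
    ∀ t : ℕ,
      r t * Wout =
        (Matrix.of (fun (_ : Fin 1) (_ : Fin Din) => (1 : ℂ)) *
          Matrix.of (fun (d : Fin Din) (j : Fin N) => Win d j * R t d j)) * Wout := by
  have hr_succ : ∀ t i j, r (t + 1) i j = r t i j * Λ j + vecMul (u (t + 1)) Win j :=
    fun t i j => by simp [hr (t + 1) t.succ_pos]
  have hR_succ : ∀ t d j, R (t + 1) d j = R t d j * Λ j + u (t + 1) d :=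
    fun t => hR (t + 1) t.succ_pos
  intro t
  rw [state_eq_ones_mul_hadamard Λ Win u r R hr0 hr_succ hR0 hR_succ t]
  rfl

/-- The output of a diagonal linear ESN is entirely captured by the
input-weight-free state matrix `R(t)` and the eigenvalues:
`y(t) = r(t)·W_out = (𝟏ᵀ·(W_in ⊙ R(t)))·W_out`. -/
theorem stmt_15
    (N Din Dout : ℕ) (hN : 0 < N) (hDin : 0 < Din) (hDout : 0 < Dout)
    (Λ : Fin N → ℂ)
    (Win : Matrix (Fin Din) (Fin N) ℂ)
    (Wout : Matrix (Fin N) (Fin Dout) ℂ)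
    (u : ℕ → Fin Din → ℂ)
    (r : ℕ → Matrix (Fin 1) (Fin N) ℂ)
    (R : ℕ → Matrix (Fin Din) (Fin N) ℂ)
    (hr0 : r 0 = 0)
    (hr : ∀ t : ℕ, 1 ≤ t →
      r t = Matrix.of (fun (i : Fin 1) (j : Fin N) => r (t - 1) i j * Λ j)
              + Matrix.of (fun (_ : Fin 1) (j : Fin N) => Matrix.vecMul (u t) Win j))
    (hR0 : R 0 = 0)
    (hR : ∀ t : ℕ, 1 ≤ t → ∀ (d : Fin Din) (j : Fin N),
      R t d j = R (t - 1) d j * Λ j + u t d) :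
    ∀ t : ℕ,
      r t * Wout =
        (Matrix.of (fun (_ : Fin 1) (_ : Fin Din) => (1 : ℂ)) *
          Matrix.of (fun (d : Fin Din) (j : Fin N) => Win d j * R t d j)) * Wout :=
  stmt_15_general N Din Dout Λ Win Wout u r R hr0 hr hR0 hR
end
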